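/- Let z : ZMod (2t) → ℤ satisfy |z(k+1) - z(k)| = 1 and z(k+t) = t - z(k) for all k. Then the number of local minima of z equals 3t/4 + (1/(8t))·∑_{k=0}^{2t-1} |ẑ(k)|²·(2cos²(πk/t) - cos(πk/t) - 1). -/

import Mathlib

/-!
Write `d k = z (k + 1) - z k = ±1`. A local minimum sits at `k + 1` exactly when
`(1 - d k) (1 + d (k + 1)) = 4` (and the product is `0` otherwise), so summing over the cycle,
`4 · #minima = 2t - ∑ d k d (k + 1)`. Both `∑ d k d (k + 1)` and `∑ (d k)² = 2t` are combinations of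
the autocorrelations `R m = ∑ z (j + m) z j`, which yields `8 · #minima = 6t + 2 (R 2 - R 1)`.
On the Fourier side, `2t · R m = ∑ |ẑ k|² cos (π m k / t)` (Wiener–Khinchin), and
`2 cos² θ - cos θ - 1 = cos 2θ - cos θ`.
-/

/-- Number of local minima of a `2t`-periodic integer sequence. -/
def minimaCount (t : ℕ) (z : ZMod (2*t) → ℤ) : ℕ :=
  ((Finset.range (2*t)).filter (fun k : ℕ =>
    z ((k : ZMod (2*t)) - 1) > z (k : ZMod (2*t)) ∧
    z ((k : ZMod (2*t)) + 1) > z (k : ZMod (2*t)))).card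

/-- Discrete Fourier transform of a `2t`-periodic sequence,
using the primitive `2t`-th root of unity `exp(-πi/t)`. -/
noncomputable def dft (t : ℕ) (z : ZMod (2*t) → ℂ) (k : ℕ) : ℂ :=
  ∑ j ∈ Finset.range (2*t),
    z (j : ZMod (2*t)) * Complex.exp (-(Real.pi : ℂ) * Complex.I * k * j / t)


open Finset Complex ComplexConjugate
open scoped Real ZMod

namespace ZMod

variable {n : ℕ} [NeZero n]

theorem sum_range_natCast {M : Type*} [AddCommMonoid M] (f : ZMod n → M) :
    ∑ j ∈ range n, f j = ∑ j : ZMod n, f j := by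
  refine sum_bij' (fun j _ => (j : ZMod n)) (fun a _ => a.val) ?_ ?_ ?_ ?_ ?_ <;>
    intros <;> simp_all [ZMod.val_lt, ZMod.val_natCast, Nat.mod_eq_of_lt]

theorem sum_stdAddChar_mul (c : ZMod n) :
    ∑ k, stdAddChar (k * c) = if c = 0 then (n : ℂ) else 0 := by
  rw [AddChar.sum_mulShift c (isPrimitive_stdAddChar n), ZMod.card, Nat.cast_ite, Nat.cast_zero]

theorem re_stdAddChar_intCast (j : ℤ) :
    (stdAddChar (j : ZMod n)).re = Real.cos (2 * π * j / n) := by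
  rw [stdAddChar_coe, show 2 * (π : ℂ) * I * j / n = ((2 * π * j / n : ℝ) : ℂ) * I by
    push_cast; ring, exp_ofReal_mul_I_re]

theorem sum_normSq_dft_mul_stdAddChar (Φ : ZMod n → ℂ) (m : ZMod n) :
    ∑ k, (normSq (𝓕 Φ k) : ℂ) * stdAddChar (m * k) = n * ∑ j, Φ (j + m) * conj (Φ j) := by
  have hterm : ∀ k, (normSq (𝓕 Φ k) : ℂ) * stdAddChar (m * k) =
      ∑ a, ∑ b, Φ a * conj (Φ b) * stdAddChar (k * (b + m - a)) := fun k => by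
    rw [← mul_conj, dft_apply, map_sum, sum_mul_sum, sum_mul]
    refine sum_congr rfl fun a _ => ?_
    rw [sum_mul]
    refine sum_congr rfl fun b _ => ?_
    rw [smul_eq_mul, smul_eq_mul, map_mul, ← AddChar.map_neg_eq_conj, neg_neg,
      show k * (b + m - a) = -(a * k) + b * k + m * k by ring,
      AddChar.map_add_eq_mul, AddChar.map_add_eq_mul]
    ring
  calc ∑ k, (normSq (𝓕 Φ k) : ℂ) * stdAddChar (m * k)
      = ∑ a, ∑ b, Φ a * conj (Φ b) * ∑ k, stdAddChar (k * (b + m - a)) := by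
        simp only [hterm, mul_sum]
        rw [sum_comm]
        exact sum_congr rfl fun a _ => sum_comm
    _ = ∑ b, n * (Φ (b + m) * conj (Φ b)) := by
        simp only [sum_stdAddChar_mul, sub_eq_zero, mul_ite, mul_zero]
        rw [sum_comm]
        exact sum_congr rfl fun b _ => by rw [sum_ite_eq, if_pos (mem_univ _), mul_comm]
    _ = n * ∑ j, Φ (j + m) * conj (Φ j) := (mul_sum ..).symm

end ZMod

section Autocorrelation

variable {n : ℕ} [NeZero n] {R : Type*} [CommRing R]

def autocorr (z : ZMod n → R) (m : ZMod n) : R :=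
  ∑ j, z (j + m) * z j

theorem autocorr_neg (z : ZMod n → R) (m : ZMod n) : autocorr z (-m) = autocorr z m :=
  Fintype.sum_equiv (Equiv.addRight (-m)) _ _ fun j => by
    simp only [Equiv.coe_addRight, neg_add_cancel_right, mul_comm]

theorem sum_sub_mul_sub_eq_autocorr (z : ZMod n → R) (m : ZMod n) :
    ∑ k, (z (k + 1) - z k) * (z (k + m + 1) - z (k + m)) =
      2 * autocorr z m - autocorr z (m + 1) - autocorr z (m - 1) := by
  have h₁ : ∑ k, z (k + 1) * z (k + m + 1) = autocorr z m :=
    Fintype.sum_equiv (Equiv.addRight 1) _ _ fun k => by simp only [Equiv.coe_addRight]; ring_nf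
  have h₂ : ∑ k, z (k + 1) * z (k + m) = autocorr z (m - 1) :=
    Fintype.sum_equiv (Equiv.addRight 1) _ _ fun k => by simp only [Equiv.coe_addRight]; ring_nf
  have h₃ : ∑ k, z k * z (k + m + 1) = autocorr z (m + 1) :=
    sum_congr rfl fun k _ => by ring_nf
  have h₄ : ∑ k, z k * z (k + m) = autocorr z m :=
    sum_congr rfl fun k _ => by ring_nf
  simp only [sub_mul, mul_sub, sum_sub_distrib, h₁, h₂, h₃, h₄]
  ring

end Autocorrelation

section LocalMinima

theorem four_mul_ite_lt_and_lt {a b c : ℤ} (hab : |b - a| = 1) (hbc : |c - b| = 1) :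
    4 * (if a > b ∧ c > b then 1 else 0) = (1 - (b - a)) * (1 + (c - b)) := by
  rcases (abs_eq zero_le_one).1 hab with h₁ | h₁ <;>
    rcases (abs_eq zero_le_one).1 hbc with h₂ | h₂ <;>
    rw [h₁, h₂] <;> split_ifs <;> omega

variable {n : ℕ} [NeZero n]

theorem four_mul_card_localMin (z : ZMod n → ℤ) (hstep : ∀ k, |z (k + 1) - z k| = 1) :
    4 * (#{k | z (k - 1) > z k ∧ z (k + 1) > z k} : ℤ) =
      n - ∑ k, (z (k + 1) - z k) * (z (k + 1 + 1) - z (k + 1)) := by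
  have hshift : ∑ k, (z (k + 1 + 1) - z (k + 1)) = ∑ k, (z (k + 1) - z k) :=
    Equiv.sum_comp (Equiv.addRight 1) fun k => z (k + 1) - z k
  rw [card_filter, Nat.cast_sum, mul_sum, ← Equiv.sum_comp (Equiv.addRight 1)]
  simp only [Equiv.coe_addRight, add_sub_cancel_right, Nat.cast_ite, Nat.cast_one, Nat.cast_zero]
  calc ∑ k, ((4 : ℤ) * if z k > z (k + 1) ∧ z (k + 1 + 1) > z (k + 1) then 1 else 0)
      = ∑ k, (1 - (z (k + 1) - z k)) * (1 + (z (k + 1 + 1) - z (k + 1))) :=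
        sum_congr rfl fun k _ => four_mul_ite_lt_and_lt (hstep k) (hstep (k + 1))
    _ = _ := by
        simp only [sub_mul, one_mul, mul_add, mul_one, sum_add_distrib, sum_sub_distrib, hshift]
        simp

theorem eight_mul_card_localMin (z : ZMod n → ℤ) (hstep : ∀ k, |z (k + 1) - z k| = 1) :
    8 * (#{k | z (k - 1) > z k ∧ z (k + 1) > z k} : ℤ) =
      3 * n + 2 * (autocorr z 2 - autocorr z 1) := by
  have hlag0 : (n : ℤ) = 2 * autocorr z 0 - 2 * autocorr z 1 := by
    have hsq : ∀ k, (z (k + 1) - z k) * (z (k + 1) - z k) = 1 := fun k => by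
      rw [← sq, ← sq_abs, hstep, one_pow]
    have h := sum_sub_mul_sub_eq_autocorr z 0
    simp only [add_zero, zero_add, zero_sub, autocorr_neg, hsq, sum_const, card_univ, ZMod.card,
      nsmul_eq_mul, mul_one] at h
    linear_combination h
  have hlag1 := sum_sub_mul_sub_eq_autocorr z 1
  rw [sub_self, one_add_one_eq_two] at hlag1
  linear_combination 2 * four_mul_card_localMin z hstep - 2 * hlag1 - hlag0

end LocalMinima

theorem minimaCount_eq_card (t : ℕ) [NeZero t] (z : ZMod (2 * t) → ℤ) :
    minimaCount t z = #{k | z (k - 1) > z k ∧ z (k + 1) > z k} := by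
  rw [minimaCount, card_filter, card_filter]
  exact ZMod.sum_range_natCast (fun k => if z (k - 1) > z k ∧ z (k + 1) > z k then 1 else 0)

theorem dft_eq_zmod_dft (t : ℕ) [NeZero t] (f : ZMod (2 * t) → ℂ) (k : ℕ) :
    dft t f k = 𝓕 f k := by
  rw [dft, ZMod.dft_apply, ← ZMod.sum_range_natCast]
  refine sum_congr rfl fun j _ => ?_
  rw [smul_eq_mul, mul_comm,
    show -((j : ZMod (2 * t)) * k) = (Int.cast (-(j * k : ℤ)) : ZMod (2 * t)) by push_cast; ring,
    ZMod.stdAddChar_coe]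
  have ht : (t : ℂ) ≠ 0 := NeZero.ne _
  congr 2
  push_cast
  field_simp

theorem sum_range_norm_dft_sq_mul_cos (t : ℕ) [NeZero t] (x : ZMod (2 * t) → ℝ) (m : ℕ) :
    ∑ k ∈ range (2 * t), ‖dft t (fun j => (x j : ℂ)) k‖ ^ 2 * Real.cos (m * (π * k / t)) =
      2 * t * autocorr x m := by
  have ht : (t : ℝ) ≠ 0 := NeZero.ne _
  have hcos : ∀ k : ℕ, Real.cos (m * (π * k / t)) =
      (ZMod.stdAddChar ((m : ZMod (2 * t)) * (k : ZMod (2 * t)))).re := fun k => by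
    rw [show (m : ZMod (2 * t)) * (k : ZMod (2 * t)) = ((m * k : ℤ) : ZMod (2 * t)) by
      push_cast; ring, ZMod.re_stdAddChar_intCast]
    congr 1
    push_cast
    field_simp
  calc ∑ k ∈ range (2 * t), ‖dft t (fun j => (x j : ℂ)) k‖ ^ 2 * Real.cos (m * (π * k / t))
      = (∑ k : ZMod (2 * t), (normSq (𝓕 (fun j => (x j : ℂ)) k) : ℂ) *
          ZMod.stdAddChar ((m : ZMod (2 * t)) * k)).re := by
        rw [re_sum, ← ZMod.sum_range_natCast]
        refine sum_congr rfl fun k _ => ?_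
        rw [dft_eq_zmod_dft, Complex.sq_norm, re_ofReal_mul, hcos]
    _ = 2 * t * autocorr x m := by
        rw [ZMod.sum_normSq_dft_mul_stdAddChar, autocorr]
        simp

theorem minima_eq_three_quarter_t_formula_general (t : ℕ) (z : ZMod (2*t) → ℤ)
    (hstep : ∀ k : ZMod (2*t), |z (k + 1) - z k| = 1) :
    (minimaCount t z : ℝ) =
      3*(t : ℝ)/4 + (1/(8*(t:ℝ))) * ∑ k ∈ Finset.range (2*t),
        ‖dft t (fun j => (z j : ℂ)) k‖^2 *
          (2*(Real.cos (Real.pi * k / t))^2 - Real.cos (Real.pi * k / t) - 1) := by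
  rcases Nat.eq_zero_or_pos t with rfl | ht
  · -- both sides vanish: the sums are empty and `1 / (8 * 0) = 0`
    simp [minimaCount]
  have : NeZero t := ⟨ht.ne'⟩
  have hcount := congrArg (Int.cast : ℤ → ℝ) (eight_mul_card_localMin z hstep)
  push_cast [← minimaCount_eq_card, autocorr] at hcount
  have h₁ := sum_range_norm_dft_sq_mul_cos t (fun j => (z j : ℝ)) 1
  have h₂ := sum_range_norm_dft_sq_mul_cos t (fun j => (z j : ℝ)) 2
  simp only [ofReal_intCast, Nat.cast_one, one_mul, Nat.cast_ofNat, autocorr] at h₁ h₂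
  have hsummand (θ : ℝ) : 2 * Real.cos θ ^ 2 - Real.cos θ - 1 = Real.cos (2 * θ) - Real.cos θ := by
    rw [Real.cos_two_mul]; ring
  simp only [hsummand, mul_sub, sum_sub_distrib, h₁, h₂]
  field_simp
  linarith

theorem minima_eq_three_quarter_t_formula (t : ℕ) (ht : 2 ≤ t) (z : ZMod (2*t) → ℤ)
    (hstep : ∀ k : ZMod (2*t), |z (k + 1) - z k| = 1)
    (hant : ∀ k : ZMod (2*t), z (k + (t : ZMod (2*t))) = (t : ℤ) - z k) :
    (minimaCount t z : ℝ) =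
      3*(t : ℝ)/4 + (1/(8*(t:ℝ))) * ∑ k ∈ Finset.range (2*t),
        ‖dft t (fun j => (z j : ℂ)) k‖^2 *
          (2*(Real.cos (Real.pi * k / t))^2 - Real.cos (Real.pi * k / t) - 1) :=
  minima_eq_three_quarter_t_formula_general t z hstep
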